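/- Strong completeness for possibly infinite sample sets: let x⃗ = (x₁,…,xₙ) be pairwise distinct variables and m ⊆ (Σ*)ⁿ a set of n-tuples of words. If m ⊨ₛ t and t is a solvable tuple pattern of arity n, then there exists a finite subset M′ of m such that for every finite M with M′ ⊆ M ⊆ m (viewed as learning data whose rows enumerate the tuples of M), ((x₁,…,xₙ), [M/x⃗]) ⟶* (t, Θ) holds for some Θ (where t is identified up to renaming of its variables). -/

import Mathlib

namespace STPaper

variable {A V : Type}

/-- A word over the alphabet `A`. -/
abbrev Word (A : Type) := List A

/-- A pattern: a finite word over `A ⊕ V` (letters and variables). -/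
abbrev Pat (A V : Type) := List (A ⊕ V)

/-- A tuple pattern: a finite tuple of patterns. -/
abbrev TP (A V : Type) := List (Pat A V)

/-- A column of learning data: one word per row. -/
abbrev Col (A : Type) := List (Word A)

/-- Learning data, represented as its list of columns. -/
abbrev Data (A : Type) := List (Col A)

/-- A data-substitution `[M/x⃗]`: the number `m` of rows together with the list pairing each
variable of `x⃗` with the corresponding column of `M`. -/
structure DSub (A V : Type) where
  m : ℕ
  entries : List (V × Col A)

/-- Apply a word-valued substitution to a pattern. -/
def substPatW (θ : V → Word A) (p : Pat A V) : Word A :=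
  (p.map (Sum.elim (fun a => [a]) θ)).flatten

/-- Look up the column assigned to a variable by a data-substitution (default: all-ε). -/
def lookupCol [DecidableEq V] (E : List (V × Col A)) (x : V) : Col A :=
  match E.find? (fun e => decide (e.1 = x)) with
  | some e => e.2
  | none => []

/-- The substitution corresponding to the `i`-th row of a data-substitution. -/
def DSub.rowSub [DecidableEq V] (Θ : DSub A V) (i : ℕ) : V → Word A :=
  fun x => (lookupCol Θ.entries x).getD i []

/-- `Θ.apply t` : the matrix `Θt` (as a list of columns, each of length `Θ.m`). -/
def DSub.apply [DecidableEq V] (Θ : DSub A V) (t : TP A V) : Data A :=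
  t.map (fun p => (List.range Θ.m).map (fun i => substPatW (Θ.rowSub i) p))

/-- Well-formedness of a data-substitution: pairwise-distinct variables and
all columns of length `m`. -/
def DSub.WF (Θ : DSub A V) : Prop :=
  (Θ.entries.map Prod.fst).Nodup ∧ ∀ e ∈ Θ.entries, e.2.length = Θ.m

/-- The free variables of a tuple pattern. -/
def fvTP (t : TP A V) : Set V := {x | Sum.inr x ∈ t.flatten}

/-- Substitution of a single pattern `q` for the variable `x` in a pattern. -/
def substVar [DecidableEq A] [DecidableEq V] (x : V) (q : Pat A V) (p : Pat A V) : Pat A V :=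
  (p.map (fun s => if s = Sum.inr x then q else [s])).flatten

/-- Substitution of a single pattern `q` for the variable `x` in a tuple pattern. -/
def substVarTP [DecidableEq A] [DecidableEq V] (x : V) (q : Pat A V) (t : TP A V) : TP A V :=
  t.map (substVar x q)

/-- Simultaneous substitution `[qs/xs]p` of the patterns `qs` for the variables `xs`. -/
def substVars [DecidableEq V] (xs : List V) (qs : List (Pat A V)) (p : Pat A V) : Pat A V :=
  (p.map (fun s =>
    match s with
    | Sum.inl a => [Sum.inl a]
    | Sum.inr x =>
      match (xs.zip qs).find? (fun e => decide (e.1 = x)) with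
      | some e => e.2
      | none => [Sum.inr x])).flatten

/-- Simultaneous substitution `[qs/xs]t` on a tuple pattern. -/
def substVarsTP [DecidableEq V] (xs : List V) (qs : List (Pat A V)) (t : TP A V) : TP A V :=
  t.map (substVars xs qs)

/-- A column is the all-ε column. -/
def allEps (c : Col A) : Prop := ∀ w ∈ c, w = []

/-- The trivial tuple pattern `(x₁, …, xₙ)`. -/
def trivTP (xs : List V) : TP A V := xs.map (fun x => [Sum.inr x])

section
variable [DecidableEq A] [DecidableEq V]

/-- The rewriting relation ⟶ on pairs of a tuple pattern and a data-substitution. -/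
inductive Step : (TP A V × DSub A V) → (TP A V × DSub A V) → Prop
  | pre (t : TP A V) (m : ℕ) (E : List (V × Col A)) (i j : ℕ)
      (hi : i < E.length) (hj : j < E.length) (hij : i ≠ j)
      (s : Col A) (hslen : s.length = (E[i]'hi).2.length)
      (hpre : (E[j]'hj).2 = List.zipWith (· ++ ·) (E[i]'hi).2 s)
      (hne : ¬ allEps (E[i]'hi).2)
      (x' : V) (hx1 : x' ∉ E.map Prod.fst) (hx2 : Sum.inr x' ∉ t.flatten) :
      Step (t, ⟨m, E⟩)
        (substVarTP (E[j]'hj).1 [Sum.inr (E[i]'hi).1, Sum.inr x'] t,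
         ⟨m, E.set j (x', s)⟩)
  | cpre (t : TP A V) (m : ℕ) (E : List (V × Col A)) (j : ℕ)
      (hj : j < E.length) (a : A) (s : Col A)
      (hpre : (E[j]'hj).2 = s.map (fun w => a :: w))
      (x' : V) (hx1 : x' ∉ E.map Prod.fst) (hx2 : Sum.inr x' ∉ t.flatten) :
      Step (t, ⟨m, E⟩)
        (substVarTP (E[j]'hj).1 [Sum.inl a, Sum.inr x'] t, ⟨m, E.set j (x', s)⟩)
  | eps (t : TP A V) (m : ℕ) (E : List (V × Col A)) (j : ℕ)
      (hj : j < E.length) (heps : allEps (E[j]'hj).2) :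
      Step (t, ⟨m, E⟩) (substVarTP (E[j]'hj).1 [] t, ⟨m, E.eraseIdx j⟩)

/-- `n`-step rewriting. -/
def StepN : ℕ → (TP A V × DSub A V) → (TP A V × DSub A V) → Prop
  | 0 => fun c₁ c₂ => c₁ = c₂
  | n + 1 => fun c₁ c₃ => ∃ c₂, Step c₁ c₂ ∧ StepN n c₂ c₃

end

/-- The reduction relation ⇒ on tuple patterns. -/
inductive PStep : TP A V → TP A V → Prop
  | pre (t : TP A V) (i j : ℕ) (hi : i < t.length) (hj : j < t.length)
      (hij : i ≠ j) (p' : Pat A V)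
      (hdec : t[j]'hj = (t[i]'hi) ++ p') (hne : t[i]'hi ≠ []) :
      PStep t (t.set j p')
  | cpre (t : TP A V) (j : ℕ) (hj : j < t.length) (a : A) (p' : Pat A V)
      (hdec : t[j]'hj = Sum.inl a :: p') :
      PStep t (t.set j p')
  | eps (t : TP A V) (j : ℕ) (hj : j < t.length) (heps : t[j]'hj = []) :
      PStep t (t.eraseIdx j)

/-- A tuple pattern is solvable if it reduces to a trivial tuple of pairwise
distinct variables. -/
def Solvable (t : TP A V) : Prop :=
  ∃ ys : List V, ys.Nodup ∧ Relation.ReflTransGen PStep t (trivTP ys)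

/-- The language of a tuple pattern. -/
def lang (t : TP A V) : Set (List (Word A)) :=
  {w | ∃ θ : V → Word A, w = t.map (substPatW θ)}

/-- `M ⊨ t` : there is a data-substitution `Θ` (with `rows` rows) with `Θt = M`. -/
def Models [DecidableEq V] (M : Data A) (rows : ℕ) (t : TP A V) : Prop :=
  ∃ Θ : DSub A V, Θ.m = rows ∧ Θ.WF ∧ Θ.apply t = M

/-- `M ⊨ₛ t` : additionally, no variable of `t` is mapped to ε in every row. -/
def SModels [DecidableEq V] (M : Data A) (rows : ℕ) (t : TP A V) : Prop :=
  ∃ Θ : DSub A V, Θ.m = rows ∧ Θ.WF ∧ Θ.apply t = M ∧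
    ∀ x ∈ fvTP t, ¬ allEps (lookupCol Θ.entries x)

/-- Renaming the variables of a tuple pattern. -/
def renameTP (ρ : V → V) (t : TP A V) : TP A V :=
  t.map (List.map (Sum.map id ρ))

/-- The measure `#t` of a tuple pattern. -/
def tpMeasure (t : TP A V) : ℕ := (t.map List.length).sum + t.length

/-- `size(M)`. -/
def dataSize (M : Data A) : ℕ :=
  (M.map (fun c => (c.map (fun w => w.length + 1)).sum)).sum

/-- Learning data (as columns) whose rows enumerate the given list of tuples. -/
def colsOfRows (n : ℕ) (rows : List (List (Word A))) : Data A :=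
  (List.range n).map (fun j => rows.map (fun r => r.getD j []))

/-- `m ⊨ₛ t` for a (possibly infinite) set of tuples of words. -/
def SetSModels (S : Set (List (Word A))) (t : TP A V) : Prop :=
  ∃ θ : S → V → Word A,
    (∀ v : S, (v : List (Word A)) = t.map (substPatW (θ v))) ∧
    ∀ x ∈ fvTP t, ∃ v : S, θ v x ≠ []

/-- A rule instance of the ⇒ relation. -/
inductive RuleInst (A V : Type) where
  | pre (i j : ℕ)
  | cpre (j : ℕ) (a : A)
  | eps (j : ℕ)

/-- The reduction step derived by a given rule instance. -/
def RuleStep : RuleInst A V → TP A V → TP A V → Prop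
  | .pre i j, t, t' => ∃ (hi : i < t.length) (hj : j < t.length),
      i ≠ j ∧ t[i]'hi ≠ [] ∧ ∃ p', t[j]'hj = (t[i]'hi) ++ p' ∧ t' = t.set j p'
  | .cpre j a, t, t' => ∃ (_ : j < t.length) (p' : Pat A V),
      t.getD j [] = Sum.inl a :: p' ∧ t' = t.set j p'
  | .eps j, t, t' => ∃ (_ : j < t.length), t.getD j [] = ([] : Pat A V) ∧ t' = t.eraseIdx j

/-- Well-definedness of the residual of a tuple pattern along a rule instance. -/
def ResDefined : RuleInst A V → TP A V → Prop
  | .pre i j, t => i < t.length ∧ j < t.length ∧ (t.getD i []) <+: (t.getD j [])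
  | .cpre j a, t => j < t.length ∧ ∃ p', t.getD j [] = Sum.inl a :: p'
  | .eps j, t => j < t.length ∧ t.getD j [] = ([] : Pat A V)

/-- The residual of a tuple pattern along a rule instance. -/
def residual : RuleInst A V → TP A V → TP A V
  | .pre i j, t => t.set j ((t.getD j []).drop (t.getD i []).length)
  | .cpre j _, t => t.set j ((t.getD j []).drop 1)
  | .eps j, t => t.eraseIdx j

/-- The reduction relation ⇒ extended with the postfix rules. -/
inductive PStepX : TP A V → TP A V → Prop
  | pre (t : TP A V) (i j : ℕ) (hi : i < t.length) (hj : j < t.length)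
      (hij : i ≠ j) (p' : Pat A V)
      (hdec : t[j]'hj = (t[i]'hi) ++ p') (hne : t[i]'hi ≠ []) :
      PStepX t (t.set j p')
  | cpre (t : TP A V) (j : ℕ) (hj : j < t.length) (a : A) (p' : Pat A V)
      (hdec : t[j]'hj = Sum.inl a :: p') :
      PStepX t (t.set j p')
  | eps (t : TP A V) (j : ℕ) (hj : j < t.length) (heps : t[j]'hj = []) :
      PStepX t (t.eraseIdx j)
  | post (t : TP A V) (i j : ℕ) (hi : i < t.length) (hj : j < t.length)
      (hij : i ≠ j) (p' : Pat A V)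
      (hdec : t[j]'hj = p' ++ (t[i]'hi)) (hne : t[i]'hi ≠ []) :
      PStepX t (t.set j p')
  | cpost (t : TP A V) (j : ℕ) (hj : j < t.length) (a : A) (p' : Pat A V)
      (hdec : t[j]'hj = p' ++ [Sum.inl a]) :
      PStepX t (t.set j p')
section Helpers

variable {A V : Type}

private def varOf : A ⊕ V → Option V
  | .inr x => some x
  | .inl _ => none

@[simp] private lemma varOf_inr (x : V) : varOf (Sum.inr x : A ⊕ V) = some x := rfl

private lemma substPatW_nil (θ : V → Word A) : substPatW θ ([] : Pat A V) = [] := rfl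

private lemma substPatW_cons (θ : V → Word A) (s : A ⊕ V) (p : Pat A V) :
    substPatW θ (s :: p) = Sum.elim (fun a => [a]) θ s ++ substPatW θ p := by
  simp [substPatW]

private lemma substPatW_append (θ : V → Word A) (p q : Pat A V) :
    substPatW θ (p ++ q) = substPatW θ p ++ substPatW θ q := by
  simp [substPatW]

private lemma zipWith_map_same {α β γ δ : Type} (h : β → γ → δ) (f : α → β) (g : α → γ)
    (l : List α) : List.zipWith h (l.map f) (l.map g) = l.map (fun x => h (f x) (g x)) := by
  induction l with
  | nil => rfl
  | cons a l ih => simp [ih]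

private lemma nodup_set {α : Type} {l : List α} {j : ℕ} {a : α}
    (h : l.Nodup) (ha : a ∉ l) : (l.set j a).Nodup := by
  induction l generalizing j with
  | nil => simp
  | cons b l ih =>
    cases j with
    | zero =>
      simp only [List.set]
      exact List.nodup_cons.2 ⟨fun hc => ha (List.mem_cons_of_mem _ hc), (List.nodup_cons.1 h).2⟩
    | succ j =>
      simp only [List.set]
      refine List.nodup_cons.2 ⟨?_, ih (List.nodup_cons.1 h).2 (fun hc => ha (List.mem_cons_of_mem _ hc))⟩
      intro hb
      rcases List.mem_or_eq_of_mem_set hb with h1 | h1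
      · exact (List.nodup_cons.1 h).1 h1
      · exact ha (h1 ▸ List.mem_cons_self)

private lemma map_eraseIdx {α β : Type} (f : α → β) (l : List α) (j : ℕ) :
    (l.eraseIdx j).map f = (l.map f).eraseIdx j := by
  induction l generalizing j with
  | nil => rfl
  | cons a l ih =>
    cases j with
    | zero => rfl
    | succ j => simp [List.eraseIdx, ih]

section DecV
variable [DecidableEq V]

private def lk (zs : List V) (qs : List (Pat A V)) (x : V) : Pat A V :=
  match (zs.zip qs).find? (fun e => decide (e.1 = x)) with
  | some e => e.2
  | none => [Sum.inr x]

private lemma substVars_nil (zs : List V) (qs : List (Pat A V)) :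
    substVars zs qs ([] : Pat A V) = [] := rfl

private lemma substVars_cons (zs : List V) (qs : List (Pat A V)) (s : A ⊕ V) (p : Pat A V) :
    substVars zs qs (s :: p) =
      (Sum.elim (fun a => [Sum.inl a]) (lk zs qs) s) ++ substVars zs qs p := by
  cases s <;> rfl

private lemma substVars_append (zs : List V) (qs : List (Pat A V)) (p q : Pat A V) :
    substVars zs qs (p ++ q) = substVars zs qs p ++ substVars zs qs q := by
  simp [substVars]

private lemma substVars_singleton_inr (zs : List V) (qs : List (Pat A V)) (x : V) :
    substVars zs qs [Sum.inr x] = lk zs qs x := by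
  rw [substVars_cons, substVars_nil]
  simp

private lemma lk_of_mem {zs : List V} {qs : List (Pat A V)} (h : zs.Nodup)
    {z : V} {q : Pat A V} (hm : (z, q) ∈ zs.zip qs) : lk zs qs z = q := by
  induction zs generalizing qs with
  | nil => simp at hm
  | cons z0 zs ih =>
    cases qs with
    | nil => simp at hm
    | cons q0 qs =>
      rw [List.zip_cons_cons, List.mem_cons] at hm
      by_cases hz : z0 = z
      · subst hz
        have hq : q = q0 := by
          rcases hm with h1 | h1
          · exact (Prod.mk.injEq _ _ _ _ ▸ h1).2.symm ▸ rfl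
          · exact absurd (List.of_mem_zip h1).1 (List.nodup_cons.1 h).1
        subst hq
        simp [lk, List.find?]
      · have hlk : lk (z0 :: zs) (q0 :: qs) z = lk zs qs z := by
          simp only [lk, List.zip_cons_cons]
          rw [List.find?_cons_of_neg]
          simp [hz]
        rw [hlk]
        rcases hm with h1 | h1
        · exact absurd (congrArg Prod.fst h1).symm hz
        · exact ih (List.nodup_cons.1 h).2 h1

private lemma lk_getElem {zs : List V} {qs : List (Pat A V)} (h : zs.Nodup)
    {c : ℕ} (hc : c < zs.length) (hq : c < qs.length) :
    lk zs qs (zs[c]'hc) = qs[c]'hq := by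
  apply lk_of_mem h
  have hlen : c < (zs.zip qs).length := by
    rw [List.length_zip]; omega
  have := List.getElem_zip (l := zs) (l' := qs) (i := c) (h := hlen)
  rw [← this]
  exact List.getElem_mem hlen

private lemma lk_not_mem {zs : List V} {qs : List (Pat A V)} {x : V} (hx : x ∉ zs) :
    lk zs qs x = [Sum.inr x] := by
  have : (zs.zip qs).find? (fun e => decide (e.1 = x)) = none := by
    rw [List.find?_eq_none]
    intro e he
    simp only [decide_eq_true_eq]
    intro hex
    exact hx (hex ▸ (List.of_mem_zip he).1)
  simp [lk, this]

end DecV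
end Helpers
section Keys

variable {A V : Type} [DecidableEq V]

private lemma lk_set_ne {zs : List V} {qs : List (Pat A V)} (h : zs.Nodup)
    (hlen : zs.length = qs.length) {z' : V} (hz' : z' ∉ zs) {p' : Pat A V}
    {c j : ℕ} (hc : c < zs.length) (hcj : c ≠ j) :
    lk (zs.set j z') (qs.set j p') (zs[c]'hc) = qs[c]'(hlen ▸ hc) := by
  have hnd : (zs.set j z').Nodup := nodup_set h hz'
  have hc1 : c < (zs.set j z').length := by simpa using hc
  have hc2 : c < (qs.set j p').length := by simp [← hlen]; omega
  have e1 : (zs.set j z')[c]'hc1 = zs[c]'hc := by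
    rw [List.getElem_set]; simp [Ne.symm hcj]
  have e2 : (qs.set j p')[c]'hc2 = qs[c]'(hlen ▸ hc) := by
    rw [List.getElem_set]; simp [Ne.symm hcj]
  rw [← e1, lk_getElem hnd hc1 hc2, e2]

private lemma lk_set_self {zs : List V} {qs : List (Pat A V)} (h : zs.Nodup)
    (hlen : zs.length = qs.length) {z' : V} (hz' : z' ∉ zs) {p' : Pat A V}
    {j : ℕ} (hj : j < zs.length) :
    lk (zs.set j z') (qs.set j p') z' = p' := by
  have hnd : (zs.set j z').Nodup := nodup_set h hz'
  have hj1 : j < (zs.set j z').length := by simpa using hj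
  have hj2 : j < (qs.set j p').length := by simp [← hlen]; omega
  have e1 : (zs.set j z')[j]'hj1 = z' := by rw [List.getElem_set]; simp
  have e2 : (qs.set j p')[j]'hj2 = p' := by rw [List.getElem_set]; simp
  have := lk_getElem hnd hj1 hj2
  rw [e1, e2] at this
  exact this

private lemma lk_eraseIdx {zs : List V} {qs : List (Pat A V)} (h : zs.Nodup)
    (hlen : zs.length = qs.length)
    {c j : ℕ} (hc : c < zs.length) (hj : j < zs.length) (hcj : c ≠ j) :
    lk (zs.eraseIdx j) (qs.eraseIdx j) (zs[c]'hc) = qs[c]'(hlen ▸ hc) := by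
  have hnd : (zs.eraseIdx j).Nodup := (List.eraseIdx_sublist zs j).nodup h
  have hlz : (zs.eraseIdx j).length = zs.length - 1 := by
    rw [List.length_eraseIdx]; simp [hj]
  have hlq : (qs.eraseIdx j).length = zs.length - 1 := by
    rw [List.length_eraseIdx]; rw [← hlen]; simp [hj]
  rcases Nat.lt_or_ge c j with hlt | hge
  · have hc1 : c < (zs.eraseIdx j).length := by omega
    have hc2 : c < (qs.eraseIdx j).length := by omega
    have e1 : (zs.eraseIdx j)[c]'hc1 = zs[c]'hc := by
      rw [List.getElem_eraseIdx]; simp [hlt]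
    have e2 : (qs.eraseIdx j)[c]'hc2 = qs[c]'(hlen ▸ hc) := by
      rw [List.getElem_eraseIdx]; simp [hlt]
    rw [← e1, lk_getElem hnd hc1 hc2, e2]
  · have hgt : j < c := by omega
    have hc1 : c - 1 < (zs.eraseIdx j).length := by omega
    have hc2 : c - 1 < (qs.eraseIdx j).length := by omega
    have e1 : (zs.eraseIdx j)[c-1]'hc1 = zs[c]'hc := by
      rw [List.getElem_eraseIdx]
      have : ¬ (c - 1 < j) := by omega
      simp only [this, dif_neg, not_false_iff]
      congr 1; omega
    have e2 : (qs.eraseIdx j)[c-1]'hc2 = qs[c]'(hlen ▸ hc) := by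
      rw [List.getElem_eraseIdx]
      have : ¬ (c - 1 < j) := by omega
      simp only [this, dif_neg, not_false_iff]
      congr 1; omega
    rw [← e1, lk_getElem hnd hc1 hc2, e2]

variable [DecidableEq A]

private lemma substVar_nil (z : V) (q : Pat A V) : substVar z q [] = [] := rfl

private lemma substVar_cons (z : V) (q : Pat A V) (s : A ⊕ V) (p : Pat A V) :
    substVar z q (s :: p) = (if s = Sum.inr z then q else [s]) ++ substVar z q p := rfl

/-- Key equation for the prefix rule. -/
private lemma key_pre {zs : List V} {qs : List (Pat A V)} (h : zs.Nodup)
    (hlen : zs.length = qs.length) {i j : ℕ} (hi : i < zs.length) (hj : j < zs.length)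
    (hij : i ≠ j) {z' : V} (hz' : z' ∉ zs) {p' : Pat A V}
    (hdec : qs[j]'(hlen ▸ hj) = (qs[i]'(hlen ▸ hi)) ++ p')
    (p : Pat A V) (hp : ∀ x : V, Sum.inr x ∈ p → x ∈ zs) :
    substVars (zs.set j z') (qs.set j p')
      (substVar (zs[j]'hj) [Sum.inr (zs[i]'hi), Sum.inr z'] p) = substVars zs qs p := by
  induction p with
  | nil => rfl
  | cons s p ih =>
    have hp' : ∀ x : V, Sum.inr x ∈ p → x ∈ zs := fun x hx => hp x (List.mem_cons_of_mem _ hx)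
    rw [substVar_cons, substVars_append, ih hp', substVars_cons]
    congr 1
    cases s with
    | inl a => rfl
    | inr x =>
      have hx : x ∈ zs := hp x (List.mem_cons_self)
      by_cases hxj : x = zs[j]'hj
      · rw [if_pos (by rw [hxj])]
        rw [substVars_cons, substVars_singleton_inr]
        simp only [Sum.elim_inr]
        rw [hxj, lk_getElem h hj (hlen ▸ hj), hdec]
        have e1 : lk (zs.set j z') (qs.set j p') (zs[i]'hi) = qs[i]'(hlen ▸ hi) :=
          lk_set_ne h hlen hz' hi hij
        have e2 : lk (zs.set j z') (qs.set j p') z' = p' := lk_set_self h hlen hz' hj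
        rw [e1, e2]
      · have hne : (Sum.inr x : A ⊕ V) ≠ Sum.inr (zs[j]'hj) := by
          simp [hxj]
        rw [if_neg hne, substVars_singleton_inr]
        simp only [Sum.elim_inr]
        obtain ⟨c, hc, hcx⟩ := List.mem_iff_getElem.1 hx
        have hcj : c ≠ j := by rintro rfl; exact hxj hcx.symm
        rw [← hcx, lk_set_ne h hlen hz' hc hcj, lk_getElem h hc (hlen ▸ hc)]

/-- Key equation for the constant-prefix rule. -/
private lemma key_cpre {zs : List V} {qs : List (Pat A V)} (h : zs.Nodup)
    (hlen : zs.length = qs.length) {j : ℕ} (hj : j < zs.length)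
    {z' : V} (hz' : z' ∉ zs) {a : A} {p' : Pat A V}
    (hdec : qs[j]'(hlen ▸ hj) = Sum.inl a :: p')
    (p : Pat A V) (hp : ∀ x : V, Sum.inr x ∈ p → x ∈ zs) :
    substVars (zs.set j z') (qs.set j p')
      (substVar (zs[j]'hj) [Sum.inl a, Sum.inr z'] p) = substVars zs qs p := by
  induction p with
  | nil => rfl
  | cons s p ih =>
    have hp' : ∀ x : V, Sum.inr x ∈ p → x ∈ zs := fun x hx => hp x (List.mem_cons_of_mem _ hx)
    rw [substVar_cons, substVars_append, ih hp', substVars_cons]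
    congr 1
    cases s with
    | inl a' => rfl
    | inr x =>
      have hx : x ∈ zs := hp x (List.mem_cons_self)
      by_cases hxj : x = zs[j]'hj
      · rw [if_pos (by rw [hxj])]
        rw [substVars_cons, substVars_singleton_inr]
        simp only [Sum.elim_inr, Sum.elim_inl]
        rw [hxj, lk_getElem h hj (hlen ▸ hj), hdec]
        rw [lk_set_self h hlen hz' hj]
        rfl
      · have hne : (Sum.inr x : A ⊕ V) ≠ Sum.inr (zs[j]'hj) := by simp [hxj]
        rw [if_neg hne, substVars_singleton_inr]
        simp only [Sum.elim_inr]
        obtain ⟨c, hc, hcx⟩ := List.mem_iff_getElem.1 hx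
        have hcj : c ≠ j := by rintro rfl; exact hxj hcx.symm
        rw [← hcx, lk_set_ne h hlen hz' hc hcj, lk_getElem h hc (hlen ▸ hc)]

/-- Key equation for the epsilon rule. -/
private lemma key_eps {zs : List V} {qs : List (Pat A V)} (h : zs.Nodup)
    (hlen : zs.length = qs.length) {j : ℕ} (hj : j < zs.length)
    (hdec : qs[j]'(hlen ▸ hj) = ([] : Pat A V))
    (p : Pat A V) (hp : ∀ x : V, Sum.inr x ∈ p → x ∈ zs) :
    substVars (zs.eraseIdx j) (qs.eraseIdx j)
      (substVar (zs[j]'hj) [] p) = substVars zs qs p := by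
  induction p with
  | nil => rfl
  | cons s p ih =>
    have hp' : ∀ x : V, Sum.inr x ∈ p → x ∈ zs := fun x hx => hp x (List.mem_cons_of_mem _ hx)
    rw [substVar_cons, substVars_append, ih hp', substVars_cons]
    congr 1
    cases s with
    | inl a' => rfl
    | inr x =>
      have hx : x ∈ zs := hp x (List.mem_cons_self)
      by_cases hxj : x = zs[j]'hj
      · rw [if_pos (by rw [hxj])]
        simp only [Sum.elim_inr]
        rw [substVars_nil, hxj, lk_getElem h hj (hlen ▸ hj), hdec]
      · have hne : (Sum.inr x : A ⊕ V) ≠ Sum.inr (zs[j]'hj) := by simp [hxj]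
        rw [if_neg hne, substVars_singleton_inr]
        simp only [Sum.elim_inr]
        obtain ⟨c, hc, hcx⟩ := List.mem_iff_getElem.1 hx
        have hcj : c ≠ j := by rintro rfl; exact hxj hcx.symm
        rw [← hcx, lk_eraseIdx h hlen hc hj hcj, lk_getElem h hc (hlen ▸ hc)]

end Keys
section Lifts
set_option linter.unusedSectionVars false
set_option linter.unusedTactic false

variable {A V : Type} [DecidableEq A] [DecidableEq V]

private lemma mem_substVar {z : V} {q p : Pat A V} {x : V}
    (h : Sum.inr x ∈ substVar z q p) :
    Sum.inr x ∈ q ∨ (Sum.inr x ∈ p ∧ x ≠ z) := by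
  unfold substVar at h
  rw [List.mem_flatten] at h
  obtain ⟨l, hl, hxl⟩ := h
  rw [List.mem_map] at hl
  obtain ⟨s, hs, rfl⟩ := hl
  by_cases hsz : s = Sum.inr z
  · rw [if_pos hsz] at hxl; exact Or.inl hxl
  · rw [if_neg hsz] at hxl
    rcases List.mem_singleton.1 hxl with rfl
    exact Or.inr ⟨hs, fun hh => hsz (by rw [hh])⟩

private lemma mem_substVarTP {z : V} {q : Pat A V} {u : TP A V} {x : V}
    (h : Sum.inr x ∈ (substVarTP z q u).flatten) :
    Sum.inr x ∈ q ∨ (Sum.inr x ∈ u.flatten ∧ x ≠ z) := by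
  rw [List.mem_flatten] at h
  obtain ⟨l, hl, hxl⟩ := h
  rw [substVarTP, List.mem_map] at hl
  obtain ⟨p, hp, rfl⟩ := hl
  rcases mem_substVar hxl with h1 | ⟨h1, h2⟩
  · exact Or.inl h1
  · exact Or.inr ⟨List.mem_flatten.2 ⟨p, hp, h1⟩, h2⟩

private lemma key_preTP {zs : List V} {qs : List (Pat A V)} (h : zs.Nodup)
    (hlen : zs.length = qs.length) {i j : ℕ} (hi : i < zs.length) (hj : j < zs.length)
    (hij : i ≠ j) {z' : V} (hz' : z' ∉ zs) {p' : Pat A V}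
    (hdec : qs[j]'(hlen ▸ hj) = (qs[i]'(hlen ▸ hi)) ++ p')
    (u : TP A V) (hu : ∀ x : V, Sum.inr x ∈ u.flatten → x ∈ zs) :
    substVarsTP (zs.set j z') (qs.set j p')
      (substVarTP (zs[j]'hj) [Sum.inr (zs[i]'hi), Sum.inr z'] u) = substVarsTP zs qs u := by
  simp only [substVarsTP, substVarTP, List.map_map]
  apply List.map_congr_left
  intro p hp
  exact key_pre h hlen hi hj hij hz' hdec p
    (fun x hx => hu x (List.mem_flatten.2 ⟨p, hp, hx⟩))

private lemma key_cpreTP {zs : List V} {qs : List (Pat A V)} (h : zs.Nodup)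
    (hlen : zs.length = qs.length) {j : ℕ} (hj : j < zs.length)
    {z' : V} (hz' : z' ∉ zs) {a : A} {p' : Pat A V}
    (hdec : qs[j]'(hlen ▸ hj) = Sum.inl a :: p')
    (u : TP A V) (hu : ∀ x : V, Sum.inr x ∈ u.flatten → x ∈ zs) :
    substVarsTP (zs.set j z') (qs.set j p')
      (substVarTP (zs[j]'hj) [Sum.inl a, Sum.inr z'] u) = substVarsTP zs qs u := by
  simp only [substVarsTP, substVarTP, List.map_map]
  apply List.map_congr_left
  intro p hp
  exact key_cpre h hlen hj hz' hdec p
    (fun x hx => hu x (List.mem_flatten.2 ⟨p, hp, hx⟩))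

private lemma key_epsTP {zs : List V} {qs : List (Pat A V)} (h : zs.Nodup)
    (hlen : zs.length = qs.length) {j : ℕ} (hj : j < zs.length)
    (hdec : qs[j]'(hlen ▸ hj) = ([] : Pat A V))
    (u : TP A V) (hu : ∀ x : V, Sum.inr x ∈ u.flatten → x ∈ zs) :
    substVarsTP (zs.eraseIdx j) (qs.eraseIdx j)
      (substVarTP (zs[j]'hj) [] u) = substVarsTP zs qs u := by
  simp only [substVarsTP, substVarTP, List.map_map]
  apply List.map_congr_left
  intro p hp
  exact key_eps h hlen hj hdec p
    (fun x hx => hu x (List.mem_flatten.2 ⟨p, hp, hx⟩))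

private lemma subst_trivTP (zs : List V) (qs : List (Pat A V)) (h : zs.Nodup)
    (hlen : zs.length = qs.length) :
    substVarsTP zs qs (trivTP zs) = qs := by
  apply List.ext_getElem
  · simp [substVarsTP, trivTP, hlen]
  · intro c hc1 hc2
    have hcz : c < zs.length := by
      simp [substVarsTP, trivTP] at hc1; exact hc1
    simp only [substVarsTP, trivTP, List.map_map, List.getElem_map]
    show substVars zs qs [Sum.inr (zs[c]'hcz)] = qs[c]'hc2
    rw [substVars_singleton_inr, lk_getElem h hcz hc2]

private lemma substVars_nil_nil (p : Pat A V) : substVars ([] : List V) [] p = p := by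
  induction p with
  | nil => rfl
  | cons s p ih =>
    rw [substVars_cons, ih]
    cases s <;> simp [lk]

private lemma substVarsTP_nil_nil (u : TP A V) : substVarsTP ([] : List V) [] u = u := by
  simp only [substVarsTP]
  rw [List.map_congr_left (fun p _ => substVars_nil_nil p)]
  exact List.map_id' u

private lemma renameTP_id (t : TP A V) : renameTP id t = t := by
  simp [renameTP, Sum.map_id_id]

private lemma mem_trivTP_flatten {zs : List V} {x : V}
    (h : Sum.inr x ∈ (trivTP zs : TP A V).flatten) : x ∈ zs := by
  rw [List.mem_flatten] at h
  obtain ⟨l, hl, hxl⟩ := h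
  rw [trivTP, List.mem_map] at hl
  obtain ⟨y, hy, rfl⟩ := hl
  rcases List.mem_singleton.1 hxl with h
  rw [Sum.inr.injEq] at h
  exact h ▸ hy

private lemma renameTP_substVarsTP (ρ : V → V) (zs ys : List V) (hzs : zs.Nodup)
    (hlen : zs.length = ys.length)
    (hρ : ∀ (c : ℕ) (hc : c < ys.length), ρ (ys[c]'hc) = zs[c]'(hlen ▸ hc))
    (u : TP A V) (hu : ∀ x : V, Sum.inr x ∈ u.flatten → x ∈ zs) :
    renameTP ρ (substVarsTP zs (ys.map fun y => [Sum.inr y]) u) = u := by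
  simp only [renameTP, substVarsTP, List.map_map]
  apply (List.map_congr_left ?_).trans (List.map_id u)
  intro p hp
  have hup : ∀ x : V, Sum.inr x ∈ p → x ∈ zs :=
    fun x hx => hu x (List.mem_flatten.2 ⟨p, hp, hx⟩)
  clear hp
  induction p with
  | nil => rfl
  | cons s p ih =>
    have hup' : ∀ x : V, Sum.inr x ∈ p → x ∈ zs :=
      fun x hx => hup x (List.mem_cons_of_mem _ hx)
    simp only [Function.comp_apply] at ih ⊢
    rw [substVars_cons, List.map_append, ih hup']
    congr 1
    cases s with
    | inl a => rfl
    | inr x =>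
      have hx : x ∈ zs := hup x (List.mem_cons_self)
      obtain ⟨c, hc, hcx⟩ := List.mem_iff_getElem.1 hx
      have hcy : c < ys.length := by omega
      simp only [Sum.elim_inr]
      rw [← hcx, lk_getElem hzs hc (by simp; omega)]
      have : (ys.map fun y => [Sum.inr y] : List (Pat A V))[c]'(by simp; omega)
          = [Sum.inr (ys[c]'hcy)] := by simp
      rw [this]
      simp [Sum.map, hρ c hcy]

end Lifts
section MainLem
set_option linter.unusedSectionVars false

variable {A V : Type}

private lemma getElem_mem_set_ne {α : Type} {l : List α} {i j : ℕ} (hi : i < l.length)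
    (hij : i ≠ j) (a : α) : l[i]'hi ∈ l.set j a := by
  have h1 : i < (l.set j a).length := by simpa using hi
  have h2 : (l.set j a)[i]'h1 = l[i]'hi := by rw [List.getElem_set]; simp [Ne.symm hij]
  exact List.mem_iff_getElem.2 ⟨i, h1, h2⟩

private lemma self_mem_set {α : Type} {l : List α} {j : ℕ} (hj : j < l.length) (a : α) :
    a ∈ l.set j a := by
  have h1 : j < (l.set j a).length := by simpa using hj
  have h2 : (l.set j a)[j]'h1 = a := by rw [List.getElem_set]; simp
  exact List.mem_iff_getElem.2 ⟨j, h1, h2⟩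

private lemma mem_set_of_ne {α : Type} {l : List α} {x a : α} {j : ℕ}
    (hx : x ∈ l) (hj : j < l.length) (hne : x ≠ l[j]'hj) : x ∈ l.set j a := by
  obtain ⟨c, hc, hcx⟩ := List.mem_iff_getElem.1 hx
  have hcj : c ≠ j := by rintro rfl; exact hne hcx.symm
  exact hcx ▸ getElem_mem_set_ne hc hcj a

private lemma mem_eraseIdx_of_ne {α : Type} {l : List α} {x : α} {j : ℕ}
    (hx : x ∈ l) (hj : j < l.length) (hne : x ≠ l[j]'hj) : x ∈ l.eraseIdx j := by
  obtain ⟨c, hc, hcx⟩ := List.mem_iff_getElem.1 hx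
  have hcj : c ≠ j := by rintro rfl; exact hne hcx.symm
  have hl : (l.eraseIdx j).length = l.length - 1 := by
    rw [List.length_eraseIdx]; simp [hj]
  rcases Nat.lt_or_ge c j with hlt | hge
  · have hc1 : c < (l.eraseIdx j).length := by omega
    have : (l.eraseIdx j)[c]'hc1 = l[c]'hc := by
      rw [List.getElem_eraseIdx]; simp [hlt]
    exact hcx ▸ this ▸ List.getElem_mem hc1
  · have hgt : j < c := by omega
    have hc1 : c - 1 < (l.eraseIdx j).length := by omega
    have : (l.eraseIdx j)[c-1]'hc1 = l[c]'hc := by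
      rw [List.getElem_eraseIdx]
      have hh : ¬ (c - 1 < j) := by omega
      simp only [hh, dif_neg, not_false_iff]
      congr 1; omega
    exact hcx ▸ this ▸ List.getElem_mem hc1

variable [DecidableEq A] [DecidableEq V] [Infinite V]

private lemma main_sim {m : ℕ} (hm : 0 < m) (θ : ℕ → V → Word A) (ys : List V)
    {tl : TP A V} (D : Relation.ReflTransGen PStep tl (trivTP ys)) :
    ∀ (u : TP A V) (E : List (V × Col A)),
      E.length = tl.length →
      (E.map Prod.fst).Nodup →
      (∀ x : V, Sum.inr x ∈ u.flatten → x ∈ E.map Prod.fst) →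
      (∀ (c : ℕ) (hcE : c < E.length) (hcT : c < tl.length),
        (E[c]'hcE).2 = (List.range m).map fun r => substPatW (θ r) (tl[c]'hcT)) →
      (∀ x : V, Sum.inr x ∈ tl.flatten → ∃ r, r < m ∧ θ r x ≠ []) →
      ∃ (u' : TP A V) (E' : List (V × Col A)),
        Relation.ReflTransGen Step (u, ⟨m, E⟩) (u', ⟨m, E'⟩) ∧
        (E'.map Prod.fst).Nodup ∧
        E'.length = ys.length ∧
        (∀ x : V, Sum.inr x ∈ u'.flatten → x ∈ E'.map Prod.fst) ∧
        substVarsTP (E'.map Prod.fst) (ys.map fun y => [Sum.inr y]) u' =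
          substVarsTP (E.map Prod.fst) tl u := by
  induction D using Relation.ReflTransGen.head_induction_on with
  | refl =>
    intro u E h1 h2 h3 _ _
    exact ⟨u, E, Relation.ReflTransGen.refl, h2, by simpa [trivTP] using h1, h3, rfl⟩
  | @head tcur tnext hstep Dtail ih =>
    intro u E hlenE hnd hu hcols hvar
    obtain ⟨z', hz'⟩ := Infinite.exists_notMem_finset
      ((E.map Prod.fst).toFinset ∪ ((u.flatten.filterMap varOf).toFinset))
    have hz1 : z' ∉ E.map Prod.fst := fun hc =>
      hz' (Finset.mem_union_left _ (List.mem_toFinset.2 hc))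
    have hz2 : Sum.inr z' ∉ u.flatten := fun hc =>
      hz' (Finset.mem_union_right _ (List.mem_toFinset.2
        (List.mem_filterMap.2 ⟨Sum.inr z', hc, rfl⟩)))
    have hkl : (E.map Prod.fst).length = E.length := List.length_map _
    cases hstep with
    | pre i j hi hj hij p' hdec hne =>
      have hiE : i < E.length := by omega
      have hjE : j < E.length := by omega
      have hcoli := hcols i hiE hi
      have hcolj := hcols j hjE hj
      set s : Col A := (List.range m).map (fun r => substPatW (θ r) p') with hs
      have hslen : s.length = (E[i]'hiE).2.length := by simp [hs, hcoli]
      have hpreC : (E[j]'hjE).2 = List.zipWith (· ++ ·) ((E[i]'hiE).2) s := by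
        rw [hcolj, hcoli, hs, zipWith_map_same]
        apply List.map_congr_left
        intro r _
        rw [hdec, substPatW_append]
      have hneC : ¬ allEps (E[i]'hiE).2 := by
        intro hall
        rw [hcoli] at hall
        obtain ⟨s0, rest, hsplit⟩ := List.exists_cons_of_ne_nil hne
        cases s0 with
        | inl a =>
          have hmem : substPatW (θ 0) (tcur[i]'hi) ∈
              (List.range m).map fun r => substPatW (θ r) (tcur[i]'hi) :=
            List.mem_map.2 ⟨0, List.mem_range.2 hm, rfl⟩
          have h0 := hall _ hmem
          rw [hsplit, substPatW_cons] at h0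
          simp at h0
        | inr x =>
          have hxmem : Sum.inr x ∈ tcur.flatten :=
            List.mem_flatten.2 ⟨tcur[i]'hi, List.getElem_mem hi,
              by rw [hsplit]; exact List.mem_cons_self⟩
          obtain ⟨r, hr, hθ⟩ := hvar x hxmem
          have hmem : substPatW (θ r) (tcur[i]'hi) ∈
              (List.range m).map fun r => substPatW (θ r) (tcur[i]'hi) :=
            List.mem_map.2 ⟨r, List.mem_range.2 hr, rfl⟩
          have h0 := hall _ hmem
          rw [hsplit, substPatW_cons] at h0
          simp only [Sum.elim_inr, List.append_eq_nil_iff] at h0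
          exact hθ h0.1
      have step := Step.pre u m E i j hiE hjE hij s hslen hpreC hneC z' hz1 hz2
      have hlen1 : (E.set j (z', s)).length = (tcur.set j p').length := by
        simp [hlenE]
      have hnd1 : ((E.set j (z', s)).map Prod.fst).Nodup := by
        rw [List.map_set]; exact nodup_set hnd hz1
      have hjK : j < (E.map Prod.fst).length := by omega
      have hiK : i < (E.map Prod.fst).length := by omega
      have eKi : (E.map Prod.fst)[i]'hiK = (E[i]'hiE).1 := by simp
      have eKj : (E.map Prod.fst)[j]'hjK = (E[j]'hjE).1 := by simp
      have hu1 : ∀ x : V, Sum.inr x ∈ (substVarTP (E[j]'hjE).1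
          [Sum.inr (E[i]'hiE).1, Sum.inr z'] u).flatten →
          x ∈ (E.set j (z', s)).map Prod.fst := by
        intro x hx
        rw [List.map_set]
        rcases mem_substVarTP hx with h1 | ⟨h1, h2⟩
        · rcases List.mem_cons.1 h1 with h1 | h1
          · have : x = (E[i]'hiE).1 := by simpa using h1
            rw [this, ← eKi]
            exact getElem_mem_set_ne hiK hij _
          · have : x = z' := by simpa using h1
            rw [this]
            exact self_mem_set hjK _
        · exact mem_set_of_ne (hu x h1) hjK (by rw [eKj]; exact h2)
      have hcols1 : ∀ (c : ℕ) (hcE : c < (E.set j (z', s)).length)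
          (hcT : c < (tcur.set j p').length),
          ((E.set j (z', s))[c]'hcE).2 =
            (List.range m).map fun r => substPatW (θ r) ((tcur.set j p')[c]'hcT) := by
        intro c hcE1 hcT1
        have hcE : c < E.length := by simpa using hcE1
        have hcT : c < tcur.length := by simpa using hcT1
        by_cases hcj : j = c
        · subst hcj
          have e1 : ((E.set j (z', s))[j]'hcE1).2 = s := by
            rw [List.getElem_set]; simp
          have e2 : (tcur.set j p')[j]'hcT1 = p' := by
            rw [List.getElem_set]; simp
          rw [e1, e2, hs]
        · have e1 : ((E.set j (z', s))[c]'hcE1).2 = (E[c]'hcE).2 := by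
            rw [List.getElem_set, if_neg hcj]
          have e2 : (tcur.set j p')[c]'hcT1 = tcur[c]'hcT := by
            rw [List.getElem_set, if_neg hcj]
          rw [e1, e2]
          exact hcols c hcE hcT
      have hvar1 : ∀ x : V, Sum.inr x ∈ (tcur.set j p').flatten →
          ∃ r, r < m ∧ θ r x ≠ [] := by
        intro x hx
        apply hvar
        rw [List.mem_flatten] at hx ⊢
        obtain ⟨l, hl, hxl⟩ := hx
        rcases List.mem_or_eq_of_mem_set hl with h1 | h1
        · exact ⟨l, h1, hxl⟩
        · subst h1
          exact ⟨tcur[j]'hj, List.getElem_mem hj,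
            by rw [hdec]; exact List.mem_append_right _ hxl⟩
      obtain ⟨u', E', reach, hnd', hlen', hu', heq⟩ := ih _ _ hlen1 hnd1 hu1 hcols1 hvar1
      refine ⟨u', E', Relation.ReflTransGen.head step reach, hnd', hlen', hu', ?_⟩
      rw [heq]
      rw [List.map_set]
      have hlen2 : (E.map Prod.fst).length = tcur.length := by omega
      have hdec2 : tcur[j]'(hlen2 ▸ hjK) = (tcur[i]'(hlen2 ▸ hiK)) ++ p' := hdec
      have := key_preTP hnd hlen2 hiK hjK hij hz1 hdec2 u hu
      rw [eKi, eKj] at this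
      exact this
    | cpre j hj a p' hdec =>
      have hjE : j < E.length := by omega
      have hcolj := hcols j hjE hj
      set s : Col A := (List.range m).map (fun r => substPatW (θ r) p') with hs
      have hpreC : (E[j]'hjE).2 = s.map (fun w => a :: w) := by
        rw [hcolj, hs, List.map_map]
        apply List.map_congr_left
        intro r _
        rw [hdec, substPatW_cons]
        rfl
      have step := Step.cpre u m E j hjE a s hpreC z' hz1 hz2
      have hlen1 : (E.set j (z', s)).length = (tcur.set j p').length := by simp [hlenE]
      have hnd1 : ((E.set j (z', s)).map Prod.fst).Nodup := by
        rw [List.map_set]; exact nodup_set hnd hz1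
      have hjK : j < (E.map Prod.fst).length := by omega
      have eKj : (E.map Prod.fst)[j]'hjK = (E[j]'hjE).1 := by simp
      have hu1 : ∀ x : V, Sum.inr x ∈ (substVarTP (E[j]'hjE).1
          [Sum.inl a, Sum.inr z'] u).flatten →
          x ∈ (E.set j (z', s)).map Prod.fst := by
        intro x hx
        rw [List.map_set]
        rcases mem_substVarTP hx with h1 | ⟨h1, h2⟩
        · rcases List.mem_cons.1 h1 with h1 | h1
          · simp at h1
          · have : x = z' := by simpa using h1
            rw [this]
            exact self_mem_set hjK _
        · exact mem_set_of_ne (hu x h1) hjK (by rw [eKj]; exact h2)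
      have hcols1 : ∀ (c : ℕ) (hcE : c < (E.set j (z', s)).length)
          (hcT : c < (tcur.set j p').length),
          ((E.set j (z', s))[c]'hcE).2 =
            (List.range m).map fun r => substPatW (θ r) ((tcur.set j p')[c]'hcT) := by
        intro c hcE1 hcT1
        have hcE : c < E.length := by simpa using hcE1
        have hcT : c < tcur.length := by simpa using hcT1
        by_cases hcj : j = c
        · subst hcj
          have e1 : ((E.set j (z', s))[j]'hcE1).2 = s := by
            rw [List.getElem_set]; simp
          have e2 : (tcur.set j p')[j]'hcT1 = p' := by
            rw [List.getElem_set]; simp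
          rw [e1, e2, hs]
        · have e1 : ((E.set j (z', s))[c]'hcE1).2 = (E[c]'hcE).2 := by
            rw [List.getElem_set, if_neg hcj]
          have e2 : (tcur.set j p')[c]'hcT1 = tcur[c]'hcT := by
            rw [List.getElem_set, if_neg hcj]
          rw [e1, e2]
          exact hcols c hcE hcT
      have hvar1 : ∀ x : V, Sum.inr x ∈ (tcur.set j p').flatten →
          ∃ r, r < m ∧ θ r x ≠ [] := by
        intro x hx
        apply hvar
        rw [List.mem_flatten] at hx ⊢
        obtain ⟨l, hl, hxl⟩ := hx
        rcases List.mem_or_eq_of_mem_set hl with h1 | h1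
        · exact ⟨l, h1, hxl⟩
        · subst h1
          exact ⟨tcur[j]'hj, List.getElem_mem hj,
            by rw [hdec]; exact List.mem_cons_of_mem _ hxl⟩
      obtain ⟨u', E', reach, hnd', hlen', hu', heq⟩ := ih _ _ hlen1 hnd1 hu1 hcols1 hvar1
      refine ⟨u', E', Relation.ReflTransGen.head step reach, hnd', hlen', hu', ?_⟩
      rw [heq, List.map_set]
      have hlen2 : (E.map Prod.fst).length = tcur.length := by omega
      have hdec2 : tcur[j]'(hlen2 ▸ hjK) = Sum.inl a :: p' := hdec
      have := key_cpreTP hnd hlen2 hjK hz1 hdec2 u hu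
      rw [eKj] at this
      exact this
    | eps j hj heps =>
      have hjE : j < E.length := by omega
      have hcolj := hcols j hjE hj
      have hepsC : allEps (E[j]'hjE).2 := by
        intro w hw
        rw [hcolj] at hw
        rw [List.mem_map] at hw
        obtain ⟨r, _, hr⟩ := hw
        rw [heps] at hr
        exact hr.symm
      have step := Step.eps u m E j hjE hepsC
      have hljE : (E.eraseIdx j).length = E.length - 1 := by
        rw [List.length_eraseIdx]; simp [hjE]
      have hljT : (tcur.eraseIdx j).length = tcur.length - 1 := by
        rw [List.length_eraseIdx]; simp [hj]
      have hlen1 : (E.eraseIdx j).length = (tcur.eraseIdx j).length := by omega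
      have hnd1 : ((E.eraseIdx j).map Prod.fst).Nodup := by
        rw [map_eraseIdx]
        exact ((E.map Prod.fst).eraseIdx_sublist j).nodup hnd
      have hjK : j < (E.map Prod.fst).length := by omega
      have eKj : (E.map Prod.fst)[j]'hjK = (E[j]'hjE).1 := by simp
      have hu1 : ∀ x : V, Sum.inr x ∈ (substVarTP (E[j]'hjE).1 [] u).flatten →
          x ∈ (E.eraseIdx j).map Prod.fst := by
        intro x hx
        rw [map_eraseIdx]
        rcases mem_substVarTP hx with h1 | ⟨h1, h2⟩
        · simp at h1
        · exact mem_eraseIdx_of_ne (hu x h1) hjK (by rw [eKj]; exact h2)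
      have hcols1 : ∀ (c : ℕ) (hcE : c < (E.eraseIdx j).length)
          (hcT : c < (tcur.eraseIdx j).length),
          ((E.eraseIdx j)[c]'hcE).2 =
            (List.range m).map fun r => substPatW (θ r) ((tcur.eraseIdx j)[c]'hcT) := by
        intro c hcE1 hcT1
        rcases Nat.lt_or_ge c j with hlt | hge
        · have hcE : c < E.length := by omega
          have hcT : c < tcur.length := by omega
          have e1 : ((E.eraseIdx j)[c]'hcE1).2 = (E[c]'hcE).2 := by
            rw [List.getElem_eraseIdx]; simp [hlt]
          have e2 : (tcur.eraseIdx j)[c]'hcT1 = tcur[c]'hcT := by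
            rw [List.getElem_eraseIdx]; simp [hlt]
          rw [e1, e2]
          exact hcols c hcE hcT
        · have hcE : c + 1 < E.length := by omega
          have hcT : c + 1 < tcur.length := by omega
          have hnlt : ¬ (c < j) := by omega
          have e1 : ((E.eraseIdx j)[c]'hcE1).2 = (E[c+1]'hcE).2 := by
            rw [List.getElem_eraseIdx]; simp [hnlt]
          have e2 : (tcur.eraseIdx j)[c]'hcT1 = tcur[c+1]'hcT := by
            rw [List.getElem_eraseIdx]; simp [hnlt]
          rw [e1, e2]
          exact hcols (c+1) hcE hcT
      have hvar1 : ∀ x : V, Sum.inr x ∈ (tcur.eraseIdx j).flatten →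
          ∃ r, r < m ∧ θ r x ≠ [] := by
        intro x hx
        apply hvar
        rw [List.mem_flatten] at hx ⊢
        obtain ⟨l, hl, hxl⟩ := hx
        exact ⟨l, (tcur.eraseIdx_sublist j).subset hl, hxl⟩
      obtain ⟨u', E', reach, hnd', hlen', hu', heq⟩ := ih _ _ hlen1 hnd1 hu1 hcols1 hvar1
      refine ⟨u', E', Relation.ReflTransGen.head step reach, hnd', hlen', hu', ?_⟩
      rw [heq, map_eraseIdx]
      have hlen2 : (E.map Prod.fst).length = tcur.length := by omega
      have heps2 : tcur[j]'(hlen2 ▸ hjK) = ([] : Pat A V) := heps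
      have := key_epsTP hnd hlen2 hjK heps2 u hu
      rw [eKj] at this
      exact this

end MainLem
section Ground
set_option linter.unusedSectionVars false

variable {A V : Type} [DecidableEq A] [DecidableEq V] [Infinite V]

private lemma ground_sim (m : ℕ) :
    ∀ (N : ℕ) (tl : TP A V), tpMeasure tl ≤ N →
    ∀ (u : TP A V) (E : List (V × Col A)),
      E.length = tl.length →
      (E.map Prod.fst).Nodup →
      (∀ x : V, Sum.inr x ∈ u.flatten → x ∈ E.map Prod.fst) →
      (∀ x : V, Sum.inr x ∉ tl.flatten) →
      (∀ (c : ℕ) (hc : c < E.length), (E[c]'hc).2 = ([] : Col A)) →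
      ∃ u' : TP A V,
        Relation.ReflTransGen Step (u, ⟨m, E⟩) (u', ⟨m, ([] : List (V × Col A))⟩) ∧
        u' = substVarsTP (E.map Prod.fst) tl u := by
  intro N
  induction N with
  | zero =>
    intro tl hN u E hlenE hnd hu hg hcols
    have h0 : tl.length = 0 := by
      have hle : tl.length ≤ tpMeasure tl := Nat.le_add_left _ _
      omega
    have htl : tl = [] := List.length_eq_zero_iff.1 h0
    subst htl
    have hE : E = [] := List.length_eq_zero_iff.1 (by simpa using hlenE)
    subst hE
    exact ⟨u, Relation.ReflTransGen.refl, (substVarsTP_nil_nil u).symm⟩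
  | succ N ihN =>
    intro tl hN u E hlenE hnd hu hg hcols
    cases tl with
    | nil =>
      have hE : E = [] := List.length_eq_zero_iff.1 (by simpa using hlenE)
      subst hE
      exact ⟨u, Relation.ReflTransGen.refl, (substVarsTP_nil_nil u).symm⟩
    | cons q rest =>
      have hlE : E.length = rest.length + 1 := by simpa using hlenE
      have h0E : 0 < E.length := by omega
      have h0K : 0 < (E.map Prod.fst).length := by simpa using h0E
      have eK0 : (E.map Prod.fst)[0]'h0K = (E[0]'h0E).1 := by simp
      have hlen2 : (E.map Prod.fst).length = (q :: rest : TP A V).length := by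
        simpa using hlenE
      cases q with
      | nil =>
        have hepsC : allEps (E[0]'h0E).2 := by
          rw [hcols 0 h0E]; intro w hw; simp at hw
        have step := Step.eps u m E 0 h0E hepsC
        have hmN : tpMeasure rest ≤ N := by
          simp [tpMeasure] at hN ⊢; omega
        have hlen1 : (E.eraseIdx 0).length = rest.length := by
          rw [List.length_eraseIdx]; simp [h0E]; omega
        have hnd1 : ((E.eraseIdx 0).map Prod.fst).Nodup := by
          rw [map_eraseIdx]; exact ((E.map Prod.fst).eraseIdx_sublist 0).nodup hnd
        have hu1 : ∀ x : V, Sum.inr x ∈ (substVarTP (E[0]'h0E).1 [] u).flatten →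
            x ∈ (E.eraseIdx 0).map Prod.fst := by
          intro x hx
          rw [map_eraseIdx]
          rcases mem_substVarTP hx with h1 | ⟨h1, h2⟩
          · simp at h1
          · exact mem_eraseIdx_of_ne (hu x h1) h0K (by rw [eK0]; exact h2)
        have hg1 : ∀ x : V, Sum.inr x ∉ rest.flatten := by
          intro x hx
          exact hg x (by simp only [List.flatten_cons]; simpa using hx)
        have hcols1 : ∀ (c : ℕ) (hc : c < (E.eraseIdx 0).length),
            ((E.eraseIdx 0)[c]'hc).2 = ([] : Col A) := by
          intro c hc
          have hc1 : c + 1 < E.length := by omega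
          have e1 : ((E.eraseIdx 0)[c]'hc).2 = (E[c+1]'hc1).2 := by
            rw [List.getElem_eraseIdx]; simp
          rw [e1]; exact hcols _ hc1
        obtain ⟨u', reach, hequ⟩ := ihN rest hmN (substVarTP (E[0]'h0E).1 [] u)
          (E.eraseIdx 0) hlen1 hnd1 hu1 hg1 hcols1
        refine ⟨u', Relation.ReflTransGen.head step reach, ?_⟩
        rw [hequ, map_eraseIdx]
        have heps2 : (([] :: rest : TP A V))[0]'(hlen2 ▸ h0K) = ([] : Pat A V) := rfl
        have hkey := key_epsTP hnd hlen2 h0K heps2 u hu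
        rw [eK0] at hkey
        exact hkey
      | cons s q' =>
        cases s with
        | inr x =>
          exact absurd (List.mem_flatten.2 ⟨Sum.inr x :: q',
            List.mem_cons_self, List.mem_cons_self⟩) (hg x)
        | inl a =>
          obtain ⟨z', hz'⟩ := Infinite.exists_notMem_finset
            ((E.map Prod.fst).toFinset ∪ ((u.flatten.filterMap varOf).toFinset))
          have hz1 : z' ∉ E.map Prod.fst := fun hc =>
            hz' (Finset.mem_union_left _ (List.mem_toFinset.2 hc))
          have hz2 : Sum.inr z' ∉ u.flatten := fun hc =>
            hz' (Finset.mem_union_right _ (List.mem_toFinset.2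
              (List.mem_filterMap.2 ⟨Sum.inr z', hc, rfl⟩)))
          have hpreC : (E[0]'h0E).2 = ([] : Col A).map (fun w => a :: w) := by
            rw [hcols 0 h0E]; rfl
          have step := Step.cpre u m E 0 h0E a [] hpreC z' hz1 hz2
          have hmN : tpMeasure (q' :: rest) ≤ N := by
            simp [tpMeasure] at hN ⊢; omega
          have hlen1 : (E.set 0 (z', ([] : Col A))).length = (q' :: rest).length := by
            simp [hlE]
          have hnd1 : ((E.set 0 (z', ([] : Col A))).map Prod.fst).Nodup := by
            rw [List.map_set]; exact nodup_set hnd hz1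
          have hu1 : ∀ x : V, Sum.inr x ∈ (substVarTP (E[0]'h0E).1
              [Sum.inl a, Sum.inr z'] u).flatten →
              x ∈ (E.set 0 (z', ([] : Col A))).map Prod.fst := by
            intro x hx
            rw [List.map_set]
            rcases mem_substVarTP hx with h1 | ⟨h1, h2⟩
            · rcases List.mem_cons.1 h1 with h1 | h1
              · simp at h1
              · have : x = z' := by simpa using h1
                rw [this]
                exact self_mem_set h0K _
            · exact mem_set_of_ne (hu x h1) h0K (by rw [eK0]; exact h2)
          have hg1 : ∀ x : V, Sum.inr x ∉ (q' :: rest).flatten := by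
            intro x hx
            apply hg x
            simp only [List.flatten_cons] at hx ⊢
            rcases List.mem_append.1 hx with h1 | h1
            · exact List.mem_append.2 (Or.inl (List.mem_cons_of_mem _ h1))
            · exact List.mem_append.2 (Or.inr h1)
          have hcols1 : ∀ (c : ℕ) (hc : c < (E.set 0 (z', ([] : Col A))).length),
              ((E.set 0 (z', ([] : Col A)))[c]'hc).2 = ([] : Col A) := by
            intro c hc
            have hcE : c < E.length := by simpa using hc
            by_cases hc0 : (0 : ℕ) = c
            · subst hc0
              have : (E.set 0 (z', ([] : Col A)))[0]'hc = (z', ([] : Col A)) := by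
                rw [List.getElem_set]; simp
              rw [this]
            · have : ((E.set 0 (z', ([] : Col A)))[c]'hc).2 = (E[c]'hcE).2 := by
                rw [List.getElem_set, if_neg hc0]
              rw [this]; exact hcols _ hcE
          obtain ⟨u', reach, hequ⟩ := ihN (q' :: rest) hmN
            (substVarTP (E[0]'h0E).1 [Sum.inl a, Sum.inr z'] u)
            (E.set 0 (z', ([] : Col A))) hlen1 hnd1 hu1 hg1 hcols1
          refine ⟨u', Relation.ReflTransGen.head step reach, ?_⟩
          rw [hequ, List.map_set]
          have hdec : ((Sum.inl a :: q') :: rest : TP A V)[0]'(hlen2 ▸ h0K)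
              = Sum.inl a :: q' := rfl
          have hkey := key_cpreTP hnd hlen2 h0K hz1 hdec u hu
          rw [eK0] at hkey
          exact hkey

end Ground
section Rho
set_option linter.unusedSectionVars false

variable {A V : Type} [DecidableEq V] [Countable V] [Infinite V]

private lemma exists_rho (ys zs : List V) (hys : ys.Nodup) (hzs : zs.Nodup)
    (hlen : ys.length = zs.length) :
    ∃ ρ : V → V, Function.Injective ρ ∧
      ∀ (c : ℕ) (hc : c < ys.length), ρ (ys[c]'hc) = zs[c]'(hlen ▸ hc) := by
  classical
  have hZfin : ({v : V | v ∈ zs}).Finite := zs.finite_toSet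
  have hinf : (({v : V | v ∈ zs}ᶜ : Set V)).Infinite := hZfin.infinite_compl
  haveI : Infinite ({v : V | v ∈ zs}ᶜ : Set V) := hinf.to_subtype
  obtain ⟨den⟩ := nonempty_denumerable ({v : V | v ∈ zs}ᶜ : Set V)
  obtain ⟨fnat⟩ := nonempty_embedding_nat V
  haveI := den
  let eqv : ({v : V | v ∈ zs}ᶜ : Set V) ≃ ℕ := Denumerable.eqv _
  let g : V → V := fun v => (eqv.symm (fnat v)).val
  have hginj : Function.Injective g := by
    intro a b hab
    exact fnat.injective (eqv.symm.injective (Subtype.val_injective hab))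
  have hgzs : ∀ v, g v ∉ zs := by
    intro v
    exact (eqv.symm (fnat v)).2
  refine ⟨fun x => if hx : x ∈ ys then
      zs[ys.idxOf x]'(by rw [← hlen]; exact List.idxOf_lt_length_iff.2 hx) else g x, ?_, ?_⟩
  · intro x y hxy
    by_cases hx : x ∈ ys <;> by_cases hy : y ∈ ys
    · simp only [dif_pos hx, dif_pos hy] at hxy
      have hidx := hzs.getElem_inj_iff.1 hxy
      have ex : ys[ys.idxOf x]'(List.idxOf_lt_length_iff.2 hx) = x :=
        List.getElem_idxOf _
      have ey : ys[ys.idxOf y]'(List.idxOf_lt_length_iff.2 hy) = y :=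
        List.getElem_idxOf _
      rw [← ex, ← ey]
      simp only [hidx]
    · simp only [dif_pos hx, dif_neg hy] at hxy
      exact absurd (hxy ▸ List.getElem_mem _) (hgzs y)
    · simp only [dif_neg hx, dif_pos hy] at hxy
      exact absurd (hxy.symm ▸ List.getElem_mem _) (hgzs x)
    · simp only [dif_neg hx, dif_neg hy] at hxy
      exact hginj hxy
  · intro c hc
    have hmem : ys[c]'hc ∈ ys := List.getElem_mem hc
    simp only [dif_pos hmem]
    have hlt : ys.idxOf (ys[c]'hc) < ys.length := List.idxOf_lt_length_iff.2 hmem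
    have h1 : ys[ys.idxOf (ys[c]'hc)]'hlt = ys[c]'hc := List.getElem_idxOf _
    have h2 : ys.idxOf (ys[c]'hc) = c := hys.getElem_inj_iff.1 h1
    simp only [h2]

end Rho

/-- **Strong completeness for possibly infinite sample sets.**
If `m ⊨ₛ t` for a set `S ⊆ (Σ*)ⁿ` and a solvable tuple pattern `t` of arity `n`, then
there is a finite subset `M′` of `S` such that for every finite `M` (given by a list of
rows) with `M′ ⊆ M ⊆ S`, viewed as learning data whose rows enumerate the tuples of `M`,
`((x₁,…,xₙ), [M/x⃗]) ⟶* (t, Θ)` for some `Θ` (with `t` identified up to renaming of its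
variables). -/
theorem strong_completeness
    [DecidableEq A] [DecidableEq V] [Nontrivial A] [Countable V] [Infinite V]
    (n : ℕ) (xs : List V) (hxs : xs.Nodup) (hlen : xs.length = n)
    (S : Set (List (Word A))) (t : TP A V) (harity : t.length = n)
    (hsolv : Solvable t) (hS : SetSModels S t) :
    ∃ M' : Finset (List (Word A)), (∀ v ∈ M', v ∈ S) ∧
      ∀ rows : List (List (Word A)),
        (∀ r ∈ rows, r ∈ S) → (∀ v ∈ M', v ∈ rows) →
        ∃ (ρ : V → V) (Θ : DSub A V), Function.Injective ρ ∧
          Relation.ReflTransGen Step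
            (trivTP xs, ⟨rows.length, xs.zip (colsOfRows n rows)⟩)
            (renameTP ρ t, Θ) := by
  classical
  obtain ⟨θS, h1, h2⟩ := hS
  obtain ⟨ys, hys, D⟩ := hsolv
  have hxlen : xs.length = t.length := by rw [hlen, harity]
  rcases Set.eq_empty_or_nonempty S with hSe | hSne
  · -- S is empty : t is ground and rows is forced to be empty
    refine ⟨∅, by simp, ?_⟩
    intro rows hrS _
    have hrows : rows = [] := by
      rw [List.eq_nil_iff_forall_not_mem]
      intro r hr
      have hmem := hrS r hr
      rw [hSe] at hmem
      exact hmem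
    subst hrows
    have hSe' : ∀ a, a ∉ S := by rw [hSe]; exact fun a => Set.notMem_empty a
    have hground : ∀ x : V, Sum.inr x ∉ t.flatten := by
      intro x hx
      obtain ⟨v, -⟩ := h2 x hx
      exact hSe' v.1 v.2
    have hclen : (colsOfRows n ([] : List (List (Word A)))).length = n := by
      simp [colsOfRows]
    have hlE : (xs.zip (colsOfRows n ([] : List (List (Word A))))).length = t.length := by
      rw [List.length_zip, hclen, hlen, harity]
      simp
    have hkeys : (xs.zip (colsOfRows n ([] : List (List (Word A))))).map Prod.fst = xs :=
      List.map_fst_zip (by rw [hclen, hlen])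
    have hndE : ((xs.zip (colsOfRows n ([] : List (List (Word A))))).map Prod.fst).Nodup := by
      rw [hkeys]; exact hxs
    have huE : ∀ x : V, Sum.inr x ∈ (trivTP xs : TP A V).flatten →
        x ∈ (xs.zip (colsOfRows n ([] : List (List (Word A))))).map Prod.fst := by
      intro x hx; rw [hkeys]; exact mem_trivTP_flatten hx
    have hcolsE : ∀ (c : ℕ)
        (hc : c < (xs.zip (colsOfRows n ([] : List (List (Word A))))).length),
        ((xs.zip (colsOfRows n ([] : List (List (Word A)))))[c]'hc).2 = ([] : Col A) := by
      intro c hc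
      rw [List.getElem_zip]
      simp [colsOfRows]
    obtain ⟨u', reach, hequ⟩ := ground_sim 0 (tpMeasure t) t le_rfl (trivTP xs)
      (xs.zip (colsOfRows n ([] : List (List (Word A))))) hlE hndE huE hground hcolsE
    have hu't : u' = t := by
      rw [hequ, hkeys, subst_trivTP xs t hxs hxlen]
    refine ⟨id, ⟨0, []⟩, Function.injective_id, ?_⟩
    rw [renameTP_id, ← hu't]
    exact reach
  · -- S is nonempty
    obtain ⟨s₀, hs₀⟩ := hSne
    refine ⟨insert s₀ ((t.flatten.filterMap varOf).toFinset.image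
      (fun x => if h : ∃ v : S, θS v x ≠ [] then ((h.choose : S) : List (Word A)) else s₀)),
      ?_, ?_⟩
    · intro v hv
      rcases Finset.mem_insert.1 hv with rfl | hv
      · exact hs₀
      · obtain ⟨x, -, rfl⟩ := Finset.mem_image.1 hv
        by_cases h : ∃ v : S, θS v x ≠ []
        · simp only [dif_pos h]
          exact (h.choose).2
        · simp only [dif_neg h]
          exact hs₀
    · intro rows hrS hsub
      have hs₀r : s₀ ∈ rows := hsub s₀ (Finset.mem_insert_self _ _)
      have hm : 0 < rows.length :=
        List.length_pos_iff.2 (fun hnil => by rw [hnil] at hs₀r; simp at hs₀r)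
      set θ : ℕ → V → Word A := fun r x =>
        if h : r < rows.length then θS ⟨rows[r]'h, hrS _ (List.getElem_mem h)⟩ x else []
        with hθ
      have hrowEq : ∀ (r : ℕ) (h : r < rows.length),
          rows[r]'h = t.map (substPatW (θ r)) := by
        intro r h
        have hfun : θ r = fun x => θS ⟨rows[r]'h, hrS _ (List.getElem_mem h)⟩ x := by
          funext x
          rw [hθ]
          simp only [dif_pos h]
        refine (h1 ⟨rows[r]'h, hrS _ (List.getElem_mem h)⟩).trans ?_
        rw [hfun]
      have hvar : ∀ x : V, Sum.inr x ∈ t.flatten →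
          ∃ r, r < rows.length ∧ θ r x ≠ [] := by
        intro x hx
        have hex : ∃ v : S, θS v x ≠ [] := h2 x hx
        have hmem : (if h : ∃ v : S, θS v x ≠ []
            then ((h.choose : S) : List (Word A)) else s₀) ∈ rows :=
          hsub _ (Finset.mem_insert_of_mem (Finset.mem_image.2 ⟨x,
            List.mem_toFinset.2 (List.mem_filterMap.2 ⟨Sum.inr x, hx, rfl⟩), rfl⟩))
        rw [dif_pos hex] at hmem
        obtain ⟨r, hr, hrx⟩ := List.mem_iff_getElem.1 hmem
        refine ⟨r, hr, ?_⟩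
        have hsub2 : (⟨rows[r]'hr, hrS _ (List.getElem_mem hr)⟩ : S) = hex.choose :=
          Subtype.ext hrx
        have hθr : θ r x = θS hex.choose x := by
          rw [hθ]
          simp only [dif_pos hr, hsub2]
        rw [hθr]
        exact hex.choose_spec
      have hclen : (colsOfRows n rows).length = n := by simp [colsOfRows]
      have hlE : (xs.zip (colsOfRows n rows)).length = t.length := by
        rw [List.length_zip, hclen, hlen, harity]
        simp
      have hkeys : (xs.zip (colsOfRows n rows)).map Prod.fst = xs :=
        List.map_fst_zip (by rw [hclen, hlen])
      have hndE : ((xs.zip (colsOfRows n rows)).map Prod.fst).Nodup := by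
        rw [hkeys]; exact hxs
      have huE : ∀ x : V, Sum.inr x ∈ (trivTP xs : TP A V).flatten →
          x ∈ (xs.zip (colsOfRows n rows)).map Prod.fst := by
        intro x hx; rw [hkeys]; exact mem_trivTP_flatten hx
      have hcolsE : ∀ (c : ℕ) (hcE : c < (xs.zip (colsOfRows n rows)).length)
          (hcT : c < t.length),
          ((xs.zip (colsOfRows n rows))[c]'hcE).2 =
            (List.range rows.length).map fun r => substPatW (θ r) (t[c]'hcT) := by
        intro c hcE hcT
        rw [List.getElem_zip]
        have hcn : c < n := by rw [← harity]; exact hcT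
        have e1 : (colsOfRows n rows)[c]'(by rw [hclen]; exact hcn) =
            rows.map (fun rr => rr.getD c []) := by
          simp [colsOfRows]
        rw [e1]
        apply List.ext_getElem
        · simp
        · intro r hr1 hr2
          have hr : r < rows.length := by simpa using hr1
          simp only [List.getElem_map, List.getElem_range]
          rw [hrowEq r hr]
          rw [List.getD_eq_getElem _ _ (by rw [List.length_map]; exact hcT),
            List.getElem_map]
      obtain ⟨u', E', reach, hnd', hlen', hu', heq⟩ :=
        main_sim hm θ ys D (trivTP xs) (xs.zip (colsOfRows n rows)) hlE hndE huE hcolsE hvar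
      rw [hkeys, subst_trivTP xs t hxs hxlen] at heq
      have hlenyz : ys.length = (E'.map Prod.fst).length := by
        rw [List.length_map, hlen']
      obtain ⟨ρ, hρinj, hρ⟩ := exists_rho ys (E'.map Prod.fst) hys hnd' hlenyz
      have hren : renameTP ρ t = u' := by
        rw [← heq]
        exact renameTP_substVarsTP ρ (E'.map Prod.fst) ys hnd' hlenyz.symm hρ u' hu'
      exact ⟨ρ, ⟨rows.length, E'⟩, hρinj, by rw [hren]; exact reach⟩

end STPaper
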